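/- Assume k is even and tr(a) = 1. Then the graph G_k(a) is self-complementary: there is a graph isomorphism from G_k(a) to its complement. -/

import Mathlib

/-- The absolute trace `tr(x) = x + x² + x⁴ + ⋯ + x^{2^{k-1}}` of a finite field
of order `2^k`, taking values in the prime subfield `{0, 1} ⊆ F`. -/
def fieldTr {F : Type*} [Field F] (k : ℕ) (x : F) : F :=
  ∑ i ∈ Finset.range k, x ^ (2 ^ i)

/-- The defining relation of the graph `G_k(a)` on the vertex set `F ∪ {∞}`
(with `∞ = none`): distinct `x, y ∈ F` are related iff
`tr((xy + x + a)/(x + y)) = 0`, and `x ∈ F` is related to `∞` iff `tr(x) = 0`. -/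
def adjRel {F : Type*} [Field F] (k : ℕ) (a : F) : Option F → Option F → Prop
  | some x, some y => fieldTr k ((x * y + x + a) / (x + y)) = 0
  | some x, none   => fieldTr k x = 0
  | none,   some y => fieldTr k y = 0
  | none,   none   => False

/-- The graph `G_k(a)` on the vertex set `F ∪ {∞}`.  (When `tr(1) = 0`, the
relation `adjRel` is symmetric on distinct vertices, so `fromRel` produces
exactly the graph whose adjacency is given by `adjRel`.) -/
def Gka {F : Type*} [Field F] (k : ℕ) (a : F) : SimpleGraph (Option F) :=
  SimpleGraph.fromRel (adjRel k a)

/-!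
The map `x ↦ x² + a`, `∞ ↦ ∞` is an isomorphism onto the complement. In characteristic 2 the
adjacency quotient `q(x, y) = (xy + x + a)/(x + y)` transforms as
`q(x² + a, y² + a) = q(x, y)² + a`, so, since `tr(z²) = tr z` and `tr a = 1`, every adjacency
trace (including `tr x` for edges to `∞`) is shifted by `1`, which swaps the values `0` and `1`.
Evenness of `k` gives `tr 1 = 0`, which makes the relation symmetric.
-/

section Trace

variable {F : Type*} [Field F] {k : ℕ}

lemma fieldTr_sq [Fintype F] (hcard : Fintype.card F = 2 ^ k) (x : F) :
    fieldTr k (x ^ 2) = fieldTr k x := by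
  have shift : fieldTr k (x ^ 2) + x = fieldTr k x + x ^ 2 ^ k := by
    have succ' := Finset.sum_range_succ' (fun i => x ^ 2 ^ i) k
    have succ := Finset.sum_range_succ (fun i => x ^ 2 ^ i) k
    simp only [pow_zero, pow_one] at succ'
    simp only [fieldTr, ← pow_mul, ← pow_succ']
    linear_combination succ - succ'
  rw [← hcard, FiniteField.pow_card] at shift
  exact add_right_cancel shift

variable [CharP F 2]

lemma fieldTr_add (x y : F) : fieldTr k (x + y) = fieldTr k x + fieldTr k y := by
  rw [fieldTr, fieldTr, fieldTr, ← Finset.sum_add_distrib]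
  exact Finset.sum_congr rfl fun i _ => add_pow_char_pow x y 2 i

lemma fieldTr_one_of_even (hk : Even k) : fieldTr k (1 : F) = 0 := by
  obtain ⟨m, rfl⟩ := hk
  simp only [fieldTr, one_pow, Finset.sum_const, Finset.card_range, nsmul_eq_mul, mul_one]
  push_cast
  linear_combination (m : F) * (CharTwo.two_eq_zero : (2 : F) = 0)

variable [Fintype F]

lemma fieldTr_eq_zero_or_eq_one (hcard : Fintype.card F = 2 ^ k) (x : F) :
    fieldTr k x = 0 ∨ fieldTr k x = 1 := by
  have idem : fieldTr k x ^ 2 = fieldTr k x := calc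
    _ = fieldTr k (x ^ 2) := by
      rw [fieldTr, fieldTr, CharTwo.sum_sq]
      exact Finset.sum_congr rfl fun i _ => by rw [← pow_mul, ← pow_mul, mul_comm]
    _ = fieldTr k x := fieldTr_sq hcard x
  rcases mul_eq_zero.mp (show fieldTr k x * (fieldTr k x - 1) = 0 by linear_combination idem)
    with h | h
  · exact Or.inl h
  · exact Or.inr (sub_eq_zero.mp h)

lemma fieldTr_sq_add_eq_zero_iff (hcard : Fintype.card F = 2 ^ k) {a : F} (ha : fieldTr k a = 1)
    (x : F) : fieldTr k (x ^ 2 + a) = 0 ↔ ¬fieldTr k x = 0 := by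
  rw [fieldTr_add, fieldTr_sq hcard, ha]
  rcases fieldTr_eq_zero_or_eq_one hcard x with h | h <;> simp [h, CharTwo.add_self_eq_zero]

end Trace

section Graph

variable {F : Type*} [Field F] [CharP F 2]

lemma adj_quotient_swap (a : F) {x y : F} (hxy : x ≠ y) :
    (y * x + y + a) / (y + x) = (x * y + x + a) / (x + y) + 1 := by
  rw [← div_self (mt CharTwo.add_eq_zero.mp hxy), ← add_div, add_comm y x]
  congr 1
  linear_combination -x * (CharTwo.two_eq_zero : (2 : F) = 0)

lemma adj_quotient_sq_add (a : F) {x y : F} (hxy : x ≠ y) :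
    ((x ^ 2 + a) * (y ^ 2 + a) + (x ^ 2 + a) + a) / ((x ^ 2 + a) + (y ^ 2 + a))
      = ((x * y + x + a) / (x + y)) ^ 2 + a := by
  rw [div_pow, eq_comm, div_add' _ _ _ (pow_ne_zero 2 (mt CharTwo.add_eq_zero.mp hxy))]
  have two : (2 : F) = 0 := CharTwo.two_eq_zero
  congr 1
  · linear_combination (x ^ 2 * y + 2 * a * x * y + a * x - a) * two
  · linear_combination (x * y - a) * two

variable {k : ℕ}

lemma adjRel_comm (hk : Even k) (a : F) (u v : Option F) : adjRel k a u v ↔ adjRel k a v u := by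
  match u, v with
  | none, none | some _, none | none, some _ => exact Iff.rfl
  | some x, some y =>
    by_cases hxy : x = y
    · rw [hxy]
    · change fieldTr k _ = 0 ↔ fieldTr k _ = 0
      rw [adj_quotient_swap a (Ne.symm hxy), fieldTr_add, fieldTr_one_of_even hk, add_zero]

lemma Gka_adj (hk : Even k) (a : F) (u v : Option F) :
    (Gka k a).Adj u v ↔ u ≠ v ∧ adjRel k a u v := by
  rw [Gka, SimpleGraph.fromRel_adj, adjRel_comm hk a v u, or_self]

variable [Fintype F]

noncomputable def sqAddEquiv (a : F) : Option F ≃ Option F :=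
  Equiv.optionCongr ((frobeniusEquiv F 2).toEquiv.trans (Equiv.addRight a))

@[simp]
lemma sqAddEquiv_some (a x : F) : sqAddEquiv a (some x) = some (x ^ 2 + a) := by
  simp [sqAddEquiv, frobenius_def]

@[simp]
lemma sqAddEquiv_none (a : F) : sqAddEquiv a none = none := rfl

lemma adjRel_sqAddEquiv_iff (hcard : Fintype.card F = 2 ^ k) {a : F} (ha : fieldTr k a = 1)
    {u v : Option F} (huv : u ≠ v) :
    adjRel k a (sqAddEquiv a u) (sqAddEquiv a v) ↔ ¬adjRel k a u v := by
  match u, v with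
  | none, none => exact absurd rfl huv
  | some x, none | none, some x =>
    rw [sqAddEquiv_some, sqAddEquiv_none]
    exact fieldTr_sq_add_eq_zero_iff hcard ha x
  | some x, some y =>
    have hxy : x ≠ y := fun h => huv (congrArg some h)
    rw [sqAddEquiv_some, sqAddEquiv_some]
    change fieldTr k _ = 0 ↔ ¬fieldTr k _ = 0
    rw [adj_quotient_sq_add a hxy, fieldTr_sq_add_eq_zero_iff hcard ha]

end Graph

theorem Gka_self_complementary
    {F : Type*} [Field F] [Fintype F] [CharP F 2] (k : ℕ) (hk : Even k)
    (hcard : Fintype.card F = 2 ^ k) (a : F) (ha : fieldTr k a = 1) :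
    Nonempty (Gka k a ≃g (Gka k a)ᶜ) := by
  refine ⟨⟨sqAddEquiv a, fun {u v} => ?_⟩⟩
  rw [SimpleGraph.compl_adj, Gka_adj hk, Gka_adj hk, (sqAddEquiv a).injective.ne_iff]
  by_cases huv : u = v
  · simp [huv]
  · simp [huv, adjRel_sqAddEquiv_iff hcard ha huv]
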